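/- Let μ be a singular cardinal of cofinality ω with increasing regular cardinals μₙ cofinal in μ. The poset Q of closed subsets of μ of size μ (ordered by almost-inclusion mod sets of size < μ) is σ-closed: every decreasing ω-sequence q₀ ≥ q₁ ≥ q₂ ≥ … in Q has a lower bound q ∈ Q. -/

import Mathlib

open Cardinal Set

noncomputable section

/-- Cardinality of a set of ordinals. -/
def scard (s : Set Ordinal.{0}) : Cardinal.{1} := Cardinal.mk s

/-- The set of accumulation points of a set of ordinals `p`:
ordinals `α` such that `p ∩ α` is nonempty and unbounded in `α`. -/
def accSet (p : Set Ordinal.{0}) : Set Ordinal.{0} :=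
  {α | (p ∩ Set.Iio α).Nonempty ∧ α = sSup (p ∩ Set.Iio α)}

/-- A set of ordinals is closed iff it contains all of its accumulation
points below its supremum. -/
def IsClosedCond (q : Set Ordinal.{0}) : Prop :=
  accSet q ∩ Set.Iio (sSup q) ⊆ q

/-- Order type of a set of ordinals. -/
def otp (s : Set Ordinal.{0}) : Ordinal.{1} :=
  Ordinal.type ((· < ·) : s → s → Prop)

/-- Membership in the poset `P`: subsets of `μ` of cardinality `μ`. -/
def InP (μ : Cardinal.{0}) (p : Set Ordinal.{0}) : Prop :=
  p ⊆ Set.Iio μ.ord ∧ scard p = Cardinal.lift.{1,0} μ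

/-- The almost-inclusion ordering: `p₁ ≤ p₂` iff `|p₁ \ p₂| < μ`. -/
def condLe (μ : Cardinal.{0}) (p₁ p₂ : Set Ordinal.{0}) : Prop :=
  scard (p₁ \ p₂) < Cardinal.lift.{1,0} μ

/-- Membership in the poset `Q`: closed subsets of `μ` of cardinality `μ`. -/
def InQ (μ : Cardinal.{0}) (q : Set Ordinal.{0}) : Prop :=
  InP μ q ∧ IsClosedCond q

/-- The interval `[μₙ, μₙ₊₁)`. -/
def interval (μseq : ℕ → Cardinal.{0}) (n : ℕ) : Set Ordinal.{0} :=
  Set.Ico ((μseq n).ord) ((μseq (n+1)).ord)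

/-- `a(q) = {n : q ∩ [μₙ, μₙ₊₁) ≠ ∅}`. -/
def aSet (μseq : ℕ → Cardinal.{0}) (q : Set Ordinal.{0}) : Set ℕ :=
  {n | (q ∩ interval μseq n).Nonempty}

/-- Normality: letting `⟨mₙ⟩` enumerate `a(q)` increasingly,
`otp (q ∩ [μ_{mₙ}, μ_{mₙ+1})) = μₙ + 1`. -/
def IsNormalCond (μseq : ℕ → Cardinal.{0}) (q : Set Ordinal.{0}) : Prop :=
  ∃ m : ℕ → ℕ, StrictMono m ∧ Set.range m = aSet μseq q ∧
    ∀ n, otp (q ∩ interval μseq (m n)) = Ordinal.lift.{1,0} ((μseq n).ord + 1)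

/-- `χ⁺_q(n) = sup (q ∩ [μₙ, μₙ₊₁))`. -/
def chiP (μseq : ℕ → Cardinal.{0}) (q : Set Ordinal.{0}) (n : ℕ) : Ordinal.{0} :=
  sSup (q ∩ interval μseq n)

/-- `χ⁻_q(n) = min (q ∩ [μₙ, μₙ₊₁))`. -/
def chiM (μseq : ℕ → Cardinal.{0}) (q : Set Ordinal.{0}) (n : ℕ) : Ordinal.{0} :=
  sInf (q ∩ interval μseq n)

/-- `μₙ` is a strictly increasing sequence of regular cardinals with supremum `μ`. -/
def GoodSeq (μ : Cardinal.{0}) (μseq : ℕ → Cardinal.{0}) : Prop :=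
  StrictMono μseq ∧ (∀ n, (μseq n).IsRegular) ∧ μ = ⨆ n, μseq n

/-! Let `Dₙ = q₀ ∩ ⋯ ∩ qₙ`: it is closed, has size `μ`, and `qₙ \ Dₙ` is small. Choose
`β₀ ≤ β₁ ≤ ⋯ < μ` such that the block `Dₙ ∩ [βₙ, βₙ₊₁)` has size at least `μₙ`, and let `q` be the
union of the blocks together with its accumulation points below `μ`; it has size `μ` and is closed.
Above `βₖ` every point of the union lies in `Dₖ`, hence so does every accumulation point beyond
`βₖ`, as `Dₖ` is closed. So `q \ qₖ ⊆ βₖ + 1` is bounded, hence small. -/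

lemma scard_mono {s t : Set Ordinal.{0}} (h : s ⊆ t) : scard s ≤ scard t :=
  Cardinal.mk_le_mk_of_subset h

lemma mem_accSet_iff {s : Set Ordinal.{0}} {α : Ordinal.{0}} :
    α ∈ accSet s ↔ 0 < α ∧ ∀ y < α, ∃ x ∈ s, y < x ∧ x < α := by
  have hbdd : BddAbove (s ∩ Iio α) := ⟨α, fun x hx => hx.2.le⟩
  constructor
  · rintro ⟨hne, hα⟩
    refine ⟨pos_of_gt hne.some_mem.2, fun y hy => ?_⟩
    obtain ⟨x, ⟨hxs, hxα⟩, hyx⟩ := exists_lt_of_lt_csSup hne (hα ▸ hy)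
    exact ⟨x, hxs, hyx, hxα⟩
  · rintro ⟨hα, h⟩
    obtain ⟨x, hxs, -, hxα⟩ := h 0 hα
    refine ⟨⟨x, hxs, hxα⟩, le_antisymm (le_of_forall_lt fun y hy => ?_)
      (csSup_le ⟨x, hxs, hxα⟩ fun z hz => hz.2.le)⟩
    obtain ⟨z, hzs, hyz, hzα⟩ := h y hy
    exact hyz.trans_le (le_csSup hbdd ⟨hzs, hzα⟩)

lemma accSet_mono {s t : Set Ordinal.{0}} (h : s ⊆ t) : accSet s ⊆ accSet t := by
  intro α hα
  rw [mem_accSet_iff] at hα ⊢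
  refine ⟨hα.1, fun y hy => ?_⟩
  obtain ⟨x, hxs, hyx, hxα⟩ := hα.2 y hy
  exact ⟨x, h hxs, hyx, hxα⟩

lemma accSet_union_accSet_inter_subset (s t : Set Ordinal.{0}) :
    accSet (s ∪ accSet s ∩ t) ⊆ accSet s := by
  intro α hα
  rw [mem_accSet_iff] at hα ⊢
  refine ⟨hα.1, fun y hy => ?_⟩
  obtain ⟨x, hx, hyx, hxα⟩ := hα.2 y hy
  rcases hx with hxs | ⟨hxacc, -⟩
  · exact ⟨x, hxs, hyx, hxα⟩
  · obtain ⟨z, hzs, hyz, hzx⟩ := (mem_accSet_iff.1 hxacc).2 y hyx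
    exact ⟨z, hzs, hyz, hzx.trans hxα⟩

lemma isClosedCond_union_accSet_inter_Iio {s : Set Ordinal.{0}} {a : Ordinal.{0}}
    (hs : s ⊆ Iio a) : IsClosedCond (s ∪ accSet s ∩ Iio a) := by
  rintro α ⟨hα, hαsup⟩
  have hsup : sSup (s ∪ accSet s ∩ Iio a) ≤ a :=
    csSup_le' fun x hx => hx.elim (fun hxs => (hs hxs).le) fun hx => hx.2.le
  exact Or.inr ⟨accSet_union_accSet_inter_subset s _ hα, hαsup.trans_le hsup⟩

lemma mem_accSet_of_diff_subset_Iio {s t : Set Ordinal.{0}} {b α : Ordinal.{0}}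
    (hst : s \ t ⊆ Iio b) (hbα : b < α) (hα : α ∈ accSet s) : α ∈ accSet t := by
  rw [mem_accSet_iff] at hα ⊢
  refine ⟨hα.1, fun y hy => ?_⟩
  obtain ⟨x, hxs, hyx, hxα⟩ := hα.2 (max y b) (max_lt hy hbα)
  have hxt : x ∈ t := by
    by_contra hxt
    exact (hst ⟨hxs, hxt⟩ : x < b).not_gt ((le_max_right y b).trans_lt hyx)
  exact ⟨x, hxt, (le_max_left y b).trans_lt hyx, hxα⟩

lemma union_accSet_inter_Iio_diff_subset_Iic {s t : Set Ordinal.{0}} {a b : Ordinal.{0}}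
    (hst : s \ t ⊆ Iio b) (ht : accSet t ∩ Iio a ⊆ t) :
    (s ∪ accSet s ∩ Iio a) \ t ⊆ Iic b := by
  rintro x ⟨hxs | ⟨hxacc, hxa⟩, hxt⟩
  · exact mem_Iic.2 (mem_Iio.1 (hst ⟨hxs, hxt⟩)).le
  · by_contra hbx
    exact hxt (ht ⟨mem_accSet_of_diff_subset_Iio hst (not_le.1 hbx) hxacc, hxa⟩)

lemma iUnion_inter_Ico_diff_subset_Iio {α : Type*} [LinearOrder α] {D : ℕ → Set α}
    (hD : Antitone D) {β : ℕ → α} (hβ : Monotone β) (k : ℕ) :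
    (⋃ n, D n ∩ Ico (β n) (β (n + 1))) \ D k ⊆ Iio (β k) := by
  rintro x ⟨hx, hxk⟩
  obtain ⟨n, hxn, hβx, hxβ⟩ := mem_iUnion.1 hx
  by_contra hkx
  have hkn : k ≤ n := by
    by_contra hnk
    exact hkx (hxβ.trans_le (hβ (by omega)))
  exact hxk (hD hkn hxn)

section Cardinality

variable {μ : Cardinal.{0}}

lemma scard_Iio_ord (μ : Cardinal.{0}) : scard (Iio μ.ord) = lift μ := by
  rw [scard, mk_Iio_ordinal, card_ord]

lemma scard_le_of_subset_Iio_ord {s : Set Ordinal.{0}} (hs : s ⊆ Iio μ.ord) :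
    scard s ≤ lift μ :=
  scard_Iio_ord μ ▸ scard_mono hs

lemma scard_lt_of_subset_Iic (hμ : ℵ₀ ≤ μ) {s : Set Ordinal.{0}} {a : Ordinal.{0}}
    (hs : s ⊆ Iic a) (ha : a < μ.ord) : scard s < lift μ := by
  have hsucc : Order.succ a < μ.ord := (isSuccLimit_ord hμ).succ_lt ha
  calc scard s ≤ scard (Iio (Order.succ a)) := scard_mono (Order.Iio_succ a ▸ hs)
    _ = lift (Order.succ a).card := mk_Iio_ordinal _
    _ < lift μ := lift_lt.2 (lt_ord.1 hsucc)

lemma condLe_trans (hμ : ℵ₀ ≤ μ) {p₁ p₂ p₃ : Set Ordinal.{0}}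
    (h₁₂ : condLe μ p₁ p₂) (h₂₃ : condLe μ p₂ p₃) : condLe μ p₁ p₃ :=
  calc scard (p₁ \ p₃) ≤ scard ((p₁ \ p₂) ∪ (p₂ \ p₃)) :=
        scard_mono fun x ⟨hx₁, hx₃⟩ => (em (x ∈ p₂)).elim (fun hx₂ => Or.inr ⟨hx₂, hx₃⟩)
          fun hx₂ => Or.inl ⟨hx₁, hx₂⟩
    _ ≤ scard (p₁ \ p₂) + scard (p₂ \ p₃) := mk_union_le _ _
    _ < lift μ := add_lt_of_lt (by simpa using hμ) h₁₂ h₂₃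

lemma scard_eq_of_condLe (hμ : ℵ₀ ≤ μ) {s t : Set Ordinal.{0}} (hts : t ⊆ s)
    (hs : scard s = lift μ) (hst : condLe μ s t) : scard t = lift μ := by
  refine le_antisymm (hs ▸ scard_mono hts) (not_lt.1 fun ht => ?_)
  have hsum : scard s ≤ scard t + scard (s \ t) :=
    calc scard s = scard (t ∪ (s \ t)) := by rw [union_sdiff_cancel hts]
      _ ≤ scard t + scard (s \ t) := mk_union_le _ _
  exact (hsum.trans_lt (add_lt_of_lt (by simpa using hμ) ht hst)).ne hs

lemma InP.sSup_eq (hμ : ℵ₀ ≤ μ) {p : Set Ordinal.{0}} (hp : InP μ p) : sSup p = μ.ord := by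
  refine le_antisymm (csSup_le' fun x hx => (hp.1 hx).le) (not_lt.1 fun hsup => ?_)
  have hbdd : BddAbove p := ⟨μ.ord, fun x hx => (hp.1 hx).le⟩
  exact (scard_lt_of_subset_Iic hμ (fun x hx => le_csSup hbdd hx) hsup).ne hp.2

lemma InQ.accSet_inter_Iio_subset (hμ : ℵ₀ ≤ μ) {q : Set Ordinal.{0}} (hq : InQ μ q) :
    accSet q ∩ Iio μ.ord ⊆ q :=
  hq.1.sSup_eq hμ ▸ hq.2

end Cardinality

section FiniteIntersections

variable {μ : Cardinal.{0}} {qs : ℕ → Set Ordinal.{0}}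

lemma antitone_biInter_le {α : Type*} (s : ℕ → Set α) : Antitone fun n => ⋂ k ≤ n, s k :=
  fun _ _ hmn => biInter_subset_biInter_left fun _ hk => le_trans hk hmn

lemma condLe_biInter_le (hμ : ℵ₀ ≤ μ) (hdec : ∀ n, condLe μ (qs (n + 1)) (qs n)) (n : ℕ) :
    condLe μ (qs n) (⋂ k ≤ n, qs k) := by
  induction n with
  | zero => simpa [condLe, scard] using aleph0_pos.trans_le hμ
  | succ n ih =>
    rw [condLe, biInter_le_succ, sdiff_inter_self_eq_sdiff]
    exact condLe_trans hμ (hdec n) ih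

lemma accSet_biInter_le_inter_Iio_subset (hμ : ℵ₀ ≤ μ) (hqs : ∀ n, InQ μ (qs n)) (n : ℕ) :
    accSet (⋂ k ≤ n, qs k) ∩ Iio μ.ord ⊆ ⋂ k ≤ n, qs k := by
  rintro α ⟨hα, hαμ⟩
  refine mem_iInter₂.2 fun k hk => (hqs k).accSet_inter_Iio_subset hμ ⟨?_, hαμ⟩
  exact accSet_mono (iInter₂_subset k hk) hα

end FiniteIntersections

section Chunks

variable {μ : Cardinal.{0}} {γ : ℕ → Ordinal.{0}}

lemma exists_le_scard_inter_Iio (hμ : ℵ₀ < μ) (hγ : ∀ x < μ.ord, ∃ n, x < γ n)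
    {s : Set Ordinal.{0}} (hs : s ⊆ Iio μ.ord) (hcard : scard s = lift μ)
    {c : Cardinal.{0}} (hc : c < μ) : ∃ n, lift c ≤ scard (s ∩ Iio (γ n)) := by
  by_contra! hsmall
  have hcover : ⋃ n, s ∩ Iio (γ n) = s :=
    subset_antisymm (iUnion_subset fun _ => inter_subset_left) fun x hx =>
      (hγ x (hs hx)).elim fun n hn => mem_iUnion.2 ⟨n, hx, hn⟩
  have hle : scard s ≤ ℵ₀ * lift c :=
    calc scard s = scard (⋃ n, s ∩ Iio (γ n)) := by rw [hcover]
      _ ≤ ℵ₀ * ⨆ n, scard (s ∩ Iio (γ n)) := by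
        simpa [scard] using mk_iUnion_le_lift fun n => s ∩ Iio (γ n)
      _ ≤ ℵ₀ * lift c := by gcongr; exact ciSup_le fun n => (hsmall n).le
  have hlt : ℵ₀ * lift c < lift μ :=
    mul_lt_of_lt (by simpa using hμ.le) (by simpa using hμ) (lift_lt.2 hc)
  exact (hle.trans_lt hlt).ne hcard

lemma exists_le_scard_inter_Ico (hμ : ℵ₀ < μ) (hγ_lt : ∀ n, γ n < μ.ord)
    (hγ : ∀ x < μ.ord, ∃ n, x < γ n) {s : Set Ordinal.{0}} (hs : s ⊆ Iio μ.ord)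
    (hcard : scard s = lift μ) {b : Ordinal.{0}} (hb : b < μ.ord) {c : Cardinal.{0}} (hc : c < μ) :
    ∃ e, b ≤ e ∧ e < μ.ord ∧ lift c ≤ scard (s ∩ Ico b e) := by
  have hcard' : scard (s ∩ Ici b) = lift μ :=
    scard_eq_of_condLe hμ.le inter_subset_left hcard
      (scard_lt_of_subset_Iic hμ.le
        (fun x hx => mem_Iic.2 (not_le.1 fun hbx => hx.2 ⟨hx.1, hbx⟩).le) hb)
  obtain ⟨n, hn⟩ := exists_le_scard_inter_Iio hμ hγ (inter_subset_left.trans hs) hcard' hc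
  refine ⟨max b (γ n), le_max_left _ _, max_lt hb (hγ_lt n), hn.trans (scard_mono ?_)⟩
  rintro x ⟨⟨hxs, hbx⟩, hxγ⟩
  exact ⟨hxs, hbx, lt_max_of_lt_right hxγ⟩

lemma exists_monotone_chunks (hμ : ℵ₀ < μ) (hγ_lt : ∀ n, γ n < μ.ord)
    (hγ : ∀ x < μ.ord, ∃ n, x < γ n) {D : ℕ → Set Ordinal.{0}} (hD : ∀ n, D n ⊆ Iio μ.ord)
    (hcard : ∀ n, scard (D n) = lift μ) {c : ℕ → Cardinal.{0}} (hc : ∀ n, c n < μ) :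
    ∃ β : ℕ → Ordinal.{0}, Monotone β ∧ (∀ n, β n < μ.ord) ∧
      ∀ n, lift (c n) ≤ scard (D n ∩ Ico (β n) (β (n + 1))) := by
  choose! e hbe heμ hce using fun n b (hb : b < μ.ord) =>
    exists_le_scard_inter_Ico hμ hγ_lt hγ (hD n) (hcard n) hb (hc n)
  let β : ℕ → Ordinal.{0} := fun n => Nat.rec 0 e n
  have hβ_lt : ∀ n, β n < μ.ord := fun n => by
    induction n with
    | zero => exact (isSuccLimit_ord hμ.le).bot_lt
    | succ n ih => exact heμ n (β n) ih
  exact ⟨β, monotone_nat_of_le_succ fun n => hbe n (β n) (hβ_lt n), hβ_lt,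
    fun n => hce n (β n) (hβ_lt n)⟩

end Chunks

namespace GoodSeq

variable {μ : Cardinal.{0}} {μseq : ℕ → Cardinal.{0}}

lemma lt (h : GoodSeq μ μseq) (n : ℕ) : μseq n < μ :=
  (h.1 n.lt_succ_self).trans_le (h.2.2 ▸ le_ciSup bddAbove_of_small (n + 1))

lemma exists_lt_ord (h : GoodSeq μ μseq) {x : Ordinal.{0}} (hx : x < μ.ord) :
    ∃ n, x < (μseq n).ord := by
  rw [lt_ord, h.2.2] at hx
  obtain ⟨n, hn⟩ := (lt_ciSup_iff bddAbove_of_small).1 hx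
  exact ⟨n, lt_ord.2 hn⟩

lemma lift_le (h : GoodSeq μ μseq) {c : Cardinal.{1}} (hc : ∀ n, lift (μseq n) ≤ c) :
    lift μ ≤ c := by
  rw [h.2.2, lift_iSup bddAbove_of_small]
  exact ciSup_le hc

end GoodSeq

theorem stmt_3_general (μ : Cardinal.{0}) (hinf : Cardinal.aleph0 < μ)
    (μseq : ℕ → Cardinal.{0}) (hseq : GoodSeq μ μseq)
    (qs : ℕ → Set Ordinal.{0}) (hqs : ∀ n, InQ μ (qs n))
    (hdec : ∀ n, condLe μ (qs (n+1)) (qs n)) :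
    ∃ q : Set Ordinal.{0}, InQ μ q ∧ ∀ n, condLe μ q (qs n) := by
  set D : ℕ → Set Ordinal.{0} := fun n => ⋂ k ≤ n, qs k
  have hD_sub : ∀ n, D n ⊆ qs n := fun n _ hx => mem_iInter₂.1 hx n le_rfl
  have hD_Iio : ∀ n, D n ⊆ Iio μ.ord := fun n => (hD_sub n).trans (hqs n).1.1
  have hD_card : ∀ n, scard (D n) = lift μ := fun n =>
    scard_eq_of_condLe hinf.le (hD_sub n) (hqs n).1.2 (condLe_biInter_le hinf.le hdec n)
  obtain ⟨β, hβ_mono, hβ_lt, hβ_card⟩ := exists_monotone_chunks hinf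
    (fun n => ord_lt_ord.2 (hseq.lt n)) (fun _ => hseq.exists_lt_ord) hD_Iio hD_card hseq.lt
  set q := ⋃ n, D n ∩ Ico (β n) (β (n + 1))
  have hq_Iio : q ⊆ Iio μ.ord := iUnion_subset fun n => inter_subset_left.trans (hD_Iio n)
  have hq_card : lift μ ≤ scard q :=
    hseq.lift_le fun n => (hβ_card n).trans (scard_mono (subset_iUnion_of_subset n subset_rfl))
  have hcl_Iio : q ∪ accSet q ∩ Iio μ.ord ⊆ Iio μ.ord := union_subset hq_Iio inter_subset_right
  refine ⟨q ∪ accSet q ∩ Iio μ.ord, ⟨⟨hcl_Iio, ?_⟩, isClosedCond_union_accSet_inter_Iio hq_Iio⟩,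
    fun k => ?_⟩
  · exact (scard_le_of_subset_Iio_ord hcl_Iio).antisymm
      (hq_card.trans (scard_mono subset_union_left))
  · have hdiff : (q ∪ accSet q ∩ Iio μ.ord) \ D k ⊆ Iic (β k) :=
      union_accSet_inter_Iio_diff_subset_Iic
        (iUnion_inter_Ico_diff_subset_Iio (antitone_biInter_le qs) hβ_mono k)
        (accSet_biInter_le_inter_Iio_subset hinf.le hqs k)
    exact scard_lt_of_subset_Iic hinf.le ((sdiff_subset_sdiff_right (hD_sub k)).trans hdiff)
      (hβ_lt k)

/-- The poset  of closed size- subsets of  is σ-closed: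
every decreasing -sequence has a lower bound in . -/
theorem stmt_3 (μ : Cardinal.{0}) (hinf : Cardinal.aleph0 < μ)
    (hcof : μ.ord.cof = Cardinal.aleph0)
    (μseq : ℕ → Cardinal.{0}) (hseq : GoodSeq μ μseq)
    (qs : ℕ → Set Ordinal.{0}) (hqs : ∀ n, InQ μ (qs n))
    (hdec : ∀ n, condLe μ (qs (n+1)) (qs n)) :
    ∃ q : Set Ordinal.{0}, InQ μ q ∧ ∀ n, condLe μ q (qs n) :=
  stmt_3_general μ hinf μseq hseq qs hqs hdec
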